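/- The greatest-solution criterion for fuzzy relational equations: P ∘ Q = R (max-min) with P : Fin n → Fin m → [0,1] and R : Fin n → [0,1] has a solution if and only if the vector Q̂ defined by Q̂ j = min over i of α(P i j, R i) — where α(a,b) = 1 if a ≤ b and α(a,b) = b otherwise — satisfies P ∘ Q̂ = R; moreover Q̂ is the greatest solution when solutions exist. -/
import Mathlib


/-- Gödel implication on reals. -/
noncomputable def godel (a b : ℝ) : ℝ := if a ≤ b then 1 else b

theorem stmt_6 (n m : ℕ) (P : Fin (n + 1) → Fin (m + 1) → ℝ) (R : Fin (n + 1) → ℝ)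
    (hP : ∀ i j, P i j ∈ Set.Icc (0 : ℝ) 1)
    (hR : ∀ i, R i ∈ Set.Icc (0 : ℝ) 1) :
    let Qhat : Fin (m + 1) → ℝ :=
      fun j => Finset.univ.inf' Finset.univ_nonempty (fun i => godel (P i j) (R i))
    ((∃ Q : Fin (m + 1) → ℝ, (∀ j, Q j ∈ Set.Icc (0 : ℝ) 1) ∧
        ∀ i, Finset.univ.sup' Finset.univ_nonempty (fun j => min (P i j) (Q j)) = R i) ↔
      (∀ i, Finset.univ.sup' Finset.univ_nonempty (fun j => min (P i j) (Qhat j)) = R i)) ∧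
    (∀ Q : Fin (m + 1) → ℝ, (∀ j, Q j ∈ Set.Icc (0 : ℝ) 1) →
      (∀ i, Finset.univ.sup' Finset.univ_nonempty (fun j => min (P i j) (Q j)) = R i) →
      ∀ j, Q j ≤ Qhat j) := by
  intro Qhat
  -- Qhat is in [0,1]
  have hQhat_mem : ∀ j, Qhat j ∈ Set.Icc (0 : ℝ) 1 := by
    intro j
    constructor
    · apply Finset.le_inf'
      intro i _
      unfold godel; split
      · norm_num
      · exact (hR i).1
    · refine Finset.inf'_le_of_le _ (Finset.mem_univ (0 : Fin (n + 1))) ?_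
      unfold godel; split
      · exact le_refl 1
      · exact (hR 0).2
  -- min (P i j) (Qhat j) ≤ R i always
  have hbound : ∀ i j, min (P i j) (Qhat j) ≤ R i := by
    intro i j
    have h : Qhat j ≤ godel (P i j) (R i) :=
      Finset.inf'_le _ (Finset.mem_univ i)
    by_cases hc : P i j ≤ R i
    · exact le_trans (min_le_left _ _) hc
    · simp only [godel, if_neg hc] at h
      exact le_trans (min_le_right _ _) h
  -- greatest solution property
  have hgreat : ∀ Q : Fin (m + 1) → ℝ, (∀ j, Q j ∈ Set.Icc (0 : ℝ) 1) →
      (∀ i, Finset.univ.sup' Finset.univ_nonempty (fun j => min (P i j) (Q j)) = R i) →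
      ∀ j, Q j ≤ Qhat j := by
    intro Q hQ01 hQ j
    apply Finset.le_inf'
    intro i _
    have hmin : min (P i j) (Q j) ≤ R i := by
      rw [← hQ i]
      exact Finset.le_sup' (fun j => min (P i j) (Q j)) (Finset.mem_univ j)
    unfold godel; split
    · exact (hQ01 j).2
    · rename_i hc
      rcases min_le_iff.mp hmin with h | h
      · exact absurd h hc
      · exact h
  refine ⟨⟨?_, ?_⟩, hgreat⟩
  · rintro ⟨Q, hQ01, hQ⟩ i
    apply le_antisymm
    · apply Finset.sup'_le
      intro j _
      exact hbound i j
    · rw [← hQ i]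
      apply Finset.sup'_le
      intro j _
      exact le_trans (min_le_min le_rfl (hgreat Q hQ01 hQ j))
        (Finset.le_sup' (fun j => min (P i j) (Qhat j)) (Finset.mem_univ j))
  · intro h
    exact ⟨Qhat, hQhat_mem, h⟩
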